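/- arXiv:1511.06559 — 5 statements merged into one kernel-verified Lean document; each statement's English description precedes it below -/
import Mathlib

section
/- Let H be a directed graph with a root vertex r such that for every terminal t in a set T, H contains k edge-disjoint r→t paths, and suppose H is edge-minimal with this property (removing any edge destroys it). Then for every vertex v of H, the maximum number of edge-disjoint r→v paths in H is at most k. -/
open scoped Classical

/-- The list of directed edges traversed by a list of vertices. -/
def pathEdges {V : Type*} (p : List V) : List (V × V) := p.zip p.tail

/-- `p` is a simple directed path in the edge set `E` starting at `s`. -/
def IsRPath {V : Type*} (E : Finset (V × V)) (s : V) (p : List V) : Prop :=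
  p.Nodup ∧ p.Chain' (fun u v => (u, v) ∈ E) ∧ p.head? = some s

/-- `p` is a simple directed path in `E` from `s` to `t`. -/
def IsRPathTo {V : Type*} (E : Finset (V × V)) (s t : V) (p : List V) : Prop :=
  IsRPath E s p ∧ p.getLast? = some t

/-- `E` contains `k` pairwise edge-disjoint directed `s`→`t` paths. -/
def HasKPaths {V : Type*} (E : Finset (V × V)) (s t : V) (k : ℕ) : Prop :=
  ∃ P : Fin k → List V, (∀ i, IsRPathTo E s t (P i)) ∧
    ∀ i j, i ≠ j → ∀ e, e ∈ pathEdges (P i) → e ∉ pathEdges (P j)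

/-!
Pick an edge `e` entering `v`. By minimality some terminal `t` has fewer than `k` edge-disjoint
`r → t` paths in `H \ e`, so by Menger's theorem `H \ e` has an `r`–`t` cut `C` with `|C| < k`,
and `C' = C ∪ {e}` is an `r`–`t` cut of `H` with `|C'| ≤ k`. Each of the `k` disjoint `r → t`
paths of `H` leaves the set `R` of vertices reachable from `r` in `H \ C'` through its own edge
of `C'`; hence every edge of `C'`, `e` included, leaves `R`, so `v ∉ R`. Now every `r → v` path
also leaves `R` through an edge of `C'`, and disjoint paths use distinct ones.

Menger's theorem is proved by augmenting paths: a `0-1` flow `F ⊆ E` either has an augmenting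
path in the residual graph or yields a cut whose size is the value of `F`.
-/

open Finset

section Paths

variable {V : Type*}

def Reaches (E : Finset (V × V)) (s t : V) : Prop :=
  Relation.ReflTransGen (fun u v => (u, v) ∈ E) s t

theorem pathEdges_cons_cons (a b : V) (l : List V) :
    pathEdges (a :: b :: l) = (a, b) :: pathEdges (b :: l) := rfl

theorem fst_mem_of_mem_pathEdges {e : V × V} {p : List V} (h : e ∈ pathEdges p) : e.1 ∈ p :=
  (List.of_mem_zip h).1

theorem mem_of_mem_pathEdges_of_isChain {E : Finset (V × V)} :
    ∀ {p : List V}, p.IsChain (fun u v => (u, v) ∈ E) → ∀ e ∈ pathEdges p, e ∈ E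
  | [], _, _, he => by simp [pathEdges] at he
  | [_], _, _, he => by simp [pathEdges] at he
  | a :: b :: l, h, e, he => by
    rw [List.isChain_cons_cons] at h
    rw [pathEdges_cons_cons, List.mem_cons] at he
    rcases he with rfl | he
    exacts [h.1, mem_of_mem_pathEdges_of_isChain h.2 e he]

theorem IsRPath.mem_of_mem_pathEdges {E : Finset (V × V)} {s : V} {p : List V}
    (hp : IsRPath E s p) {e : V × V} (he : e ∈ pathEdges p) : e ∈ E :=
  mem_of_mem_pathEdges_of_isChain hp.2.1 e he

theorem IsRPathTo.mono {E E' : Finset (V × V)} (h : E ⊆ E') {s t : V} {p : List V}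
    (hp : IsRPathTo E s t p) : IsRPathTo E' s t p :=
  ⟨⟨hp.1.1, hp.1.2.1.imp fun _ _ hab => h hab, hp.1.2.2⟩, hp.2⟩

theorem exists_mem_pathEdges_crossing (S : Set V) :
    ∀ {p : List V} {a b : V}, p.head? = some a → p.getLast? = some b → a ∈ S → b ∉ S →
      ∃ e ∈ pathEdges p, e.1 ∈ S ∧ e.2 ∉ S
  | [], _, _, ha, _, _, _ => by simp at ha
  | [_], _, _, ha, hb, haS, hbS => by
    simp only [List.head?_cons, List.getLast?_singleton, Option.some.injEq] at ha hb
    subst ha hb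
    exact absurd haS hbS
  | c :: d :: l, a, b, ha, hb, haS, hbS => by
    simp only [List.head?_cons, Option.some.injEq] at ha
    subst ha
    by_cases hd : d ∈ S
    · obtain ⟨e, he, heS⟩ := exists_mem_pathEdges_crossing S (p := d :: l) rfl
        (by rwa [List.getLast?_cons_cons] at hb) hd hbS
      exact ⟨e, pathEdges_cons_cons c d l ▸ List.mem_cons_of_mem _ he, heS⟩
    · exact ⟨(c, d), by simp [pathEdges_cons_cons], haS, hd⟩

theorem Reaches.exists_isRPathTo {E : Finset (V × V)} {s t : V} (h : Reaches E s t) :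
    ∃ p, IsRPathTo E s t p := by
  induction h using Relation.ReflTransGen.head_induction_on with
  | refl => exact ⟨[t], ⟨List.nodup_singleton t, List.isChain_singleton t, rfl⟩, rfl⟩
  | @head a b hab _ ih =>
    obtain ⟨p, ⟨hnd, hch, hhd⟩, hlast⟩ := ih
    by_cases ha : a ∈ p
    · obtain ⟨l₁, l₂, rfl⟩ := List.append_of_mem ha
      exact ⟨a :: l₂, ⟨hnd.sublist (List.sublist_append_right _ _), hch.right_of_append, rfl⟩,
        by simpa using hlast⟩
    · obtain ⟨l, rfl⟩ : ∃ l, p = b :: l := by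
        cases p with
        | nil => simp at hhd
        | cons c l => simp only [List.head?_cons, Option.some.injEq] at hhd; exact ⟨l, hhd ▸ rfl⟩
      exact ⟨a :: b :: l, ⟨List.nodup_cons.2 ⟨ha, hnd⟩, hch.cons_cons hab, rfl⟩,
        by simpa using hlast⟩

theorem HasKPaths.mono {E E' : Finset (V × V)} {s t : V} {j : ℕ} (h : HasKPaths E s t j)
    (hE : E ⊆ E') : HasKPaths E' s t j :=
  let ⟨P, hP, hdisj⟩ := h
  ⟨P, fun i => (hP i).mono hE, hdisj⟩

theorem HasKPaths.exists_mem_snd_eq {E : Finset (V × V)} {s t : V} {m : ℕ}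
    (h : HasKPaths E s t m) (hm : m ≠ 0) (hst : s ≠ t) : ∃ e ∈ E, e.2 = t := by
  obtain ⟨P, hP, -⟩ := h
  have hp := hP ⟨0, Nat.pos_of_ne_zero hm⟩
  obtain ⟨e, he, -, het⟩ := exists_mem_pathEdges_crossing {x | x ≠ t} hp.1.2.2 hp.2 hst
    (fun h => h rfl)
  exact ⟨e, hp.1.mem_of_mem_pathEdges he, not_not.1 het⟩

end Paths

section Flows

variable {V : Type*} [DecidableEq V]

def netOutflow (F : Finset (V × V)) (x : V) : ℤ :=
  ∑ e ∈ F, ((if e.1 = x then 1 else 0) - (if e.2 = x then 1 else 0))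

/-- An edge set read as an `s`–`t` flow of value `j` carrying one unit on each of its edges. -/
def IsFlow (F : Finset (V × V)) (s t : V) (j : ℕ) : Prop :=
  ∀ x, netOutflow F x = j * ((if s = x then 1 else 0) - (if t = x then 1 else 0))

def residualEdges (E F : Finset (V × V)) : Finset (V × V) := (E \ F) ∪ F.image Prod.swap

theorem netOutflow_union {F G : Finset (V × V)} (h : Disjoint F G) (x : V) :
    netOutflow (F ∪ G) x = netOutflow F x + netOutflow G x :=
  sum_union h

theorem netOutflow_sdiff {F D : Finset (V × V)} (h : D ⊆ F) (x : V) :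
    netOutflow (F \ D) x = netOutflow F x - netOutflow D x :=
  eq_sub_of_add_eq (sum_sdiff h)

theorem netOutflow_insert {F : Finset (V × V)} {e : V × V} (he : e ∉ F) (x : V) :
    netOutflow (insert e F) x =
      (if e.1 = x then 1 else 0) - (if e.2 = x then 1 else 0) + netOutflow F x :=
  sum_insert he

theorem netOutflow_image_swap (F : Finset (V × V)) (x : V) :
    netOutflow (F.image Prod.swap) x = -netOutflow F x := by
  rw [netOutflow, sum_image fun _ _ _ _ h => Prod.swap_injective h, netOutflow,
    ← sum_neg_distrib]
  simp only [Prod.fst_swap, Prod.snd_swap, neg_sub]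

theorem sum_netOutflow_filter {F : Finset (V × V)} {U : Finset V}
    (hU : ∀ e ∈ F, e.1 ∈ U ∧ e.2 ∈ U) (S : Set V) :
    ∑ x ∈ U.filter (· ∈ S), netOutflow F x =
      (#(F.filter fun e => e.1 ∈ S ∧ e.2 ∉ S) : ℤ) - #(F.filter fun e => e.1 ∉ S ∧ e.2 ∈ S) := by
  rw [natCast_card_filter, natCast_card_filter, ← sum_sub_distrib]
  unfold netOutflow
  rw [sum_comm]
  refine sum_congr rfl fun e he => ?_
  rw [sum_sub_distrib, sum_ite_eq, sum_ite_eq]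
  simp only [mem_filter, hU e he, true_and]
  split_ifs <;> simp_all

theorem isFlow_pathEdges :
    ∀ {p : List V} {s t : V}, p.Nodup → p.head? = some s → p.getLast? = some t →
      IsFlow (pathEdges p).toFinset s t 1
  | [], _, _, _, hs, _ => by simp at hs
  | [_], _, _, _, hs, ht => by
    simp only [List.head?_cons, List.getLast?_singleton, Option.some.injEq] at hs ht
    subst hs ht
    intro x
    simp [netOutflow, pathEdges]
  | a :: b :: l, s, t, hnd, hs, ht => by
    simp only [List.head?_cons, Option.some.injEq] at hs
    subst hs
    have ih := isFlow_pathEdges (p := b :: l) hnd.of_cons rfl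
      (by rwa [List.getLast?_cons_cons] at ht)
    have hab : (a, b) ∉ (pathEdges (b :: l)).toFinset := fun h =>
      (List.nodup_cons.1 hnd).1 (fst_mem_of_mem_pathEdges (List.mem_toFinset.1 h))
    intro x
    rw [pathEdges_cons_cons, List.toFinset_cons, netOutflow_insert hab, ih x]
    ring

theorem IsRPathTo.isFlow {E : Finset (V × V)} {s t : V} {p : List V} (hp : IsRPathTo E s t p) :
    IsFlow (pathEdges p).toFinset s t 1 :=
  isFlow_pathEdges hp.1.1 hp.1.2.2 hp.2

theorem IsRPathTo.toFinset_pathEdges_subset {E : Finset (V × V)} {s t : V} {p : List V}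
    (hp : IsRPathTo E s t p) : (pathEdges p).toFinset ⊆ E :=
  fun _ he => hp.1.mem_of_mem_pathEdges (List.mem_toFinset.1 he)

theorem HasKPaths.le_card_leaving {E C : Finset (V × V)} {s t : V} {m : ℕ}
    (h : HasKPaths E s t m) (ht : ¬Reaches (E \ C) s t) :
    m ≤ #(C.filter fun e => Reaches (E \ C) s e.1 ∧ ¬Reaches (E \ C) s e.2) := by
  obtain ⟨P, hP, hdisj⟩ := h
  choose c hcP hcS using fun i => exists_mem_pathEdges_crossing {x | Reaches (E \ C) s x}
    (hP i).1.2.2 (hP i).2 Relation.ReflTransGen.refl ht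
  have hcC : ∀ i, c i ∈ C := fun i => by
    by_contra hc
    exact (hcS i).2 <| Relation.ReflTransGen.tail (hcS i).1 <|
      mem_sdiff.2 ⟨(hP i).1.mem_of_mem_pathEdges (hcP i), hc⟩
  have hinj : Set.InjOn c (univ : Finset (Fin m)) := fun i _ i' _ hii' => by
    by_contra hne
    exact hdisj i i' hne _ (hcP i) (hii' ▸ hcP i')
  simpa using card_le_card_of_injOn c (fun i _ => mem_filter.2 ⟨hcC i, hcS i⟩) hinj

theorem HasKPaths.cons {E : Finset (V × V)} {s t : V} {p : List V} {j : ℕ}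
    (hp : IsRPathTo E s t p) (h : HasKPaths (E \ (pathEdges p).toFinset) s t j) :
    HasKPaths E s t (j + 1) := by
  obtain ⟨P, hP, hdisj⟩ := h
  have hP_p : ∀ i, ∀ e ∈ pathEdges (P i), e ∉ pathEdges p := fun i e he hep =>
    (mem_sdiff.1 ((hP i).1.mem_of_mem_pathEdges he)).2 (List.mem_toFinset.2 hep)
  refine ⟨Fin.cons p P, Fin.cases hp fun i => (hP i).mono sdiff_subset, ?_⟩
  intro i i' hne
  cases i using Fin.cases <;> cases i' using Fin.cases
  · exact absurd rfl hne
  · exact fun e hep he => hP_p _ e he hep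
  · exact fun e he hep => hP_p _ e he hep
  · exact hdisj _ _ fun h => hne (congrArg Fin.succ h)

namespace IsFlow

variable {E F : Finset (V × V)} {s t : V} {j : ℕ}

theorem card_leaving_sub_card_entering (hF : IsFlow F s t j) {S : Set V} (hs : s ∈ S)
    (ht : t ∉ S) :
    (#(F.filter fun e => e.1 ∈ S ∧ e.2 ∉ S) : ℤ) - #(F.filter fun e => e.1 ∉ S ∧ e.2 ∈ S) = j := by
  set U := insert s (F.image Prod.fst ∪ F.image Prod.snd)
  have hU : ∀ e ∈ F, e.1 ∈ U ∧ e.2 ∈ U := fun e he =>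
    ⟨mem_insert_of_mem (mem_union_left _ (mem_image_of_mem _ he)),
      mem_insert_of_mem (mem_union_right _ (mem_image_of_mem _ he))⟩
  rw [← sum_netOutflow_filter hU S, sum_congr rfl fun x _ => hF x, ← mul_sum, sum_sub_distrib,
    sum_ite_eq, sum_ite_eq]
  simp [U, hs, ht]

theorem reaches (hF : IsFlow F s t j) (hj : j ≠ 0) : Reaches F s t := by
  by_contra ht
  set S : Set V := {x | Reaches F s x}
  have hleaving : F.filter (fun e => e.1 ∈ S ∧ e.2 ∉ S) = ∅ :=
    filter_eq_empty_iff.2 fun e he h => h.2 (Relation.ReflTransGen.tail h.1 he)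
  have := hF.card_leaving_sub_card_entering (S := S) Relation.ReflTransGen.refl ht
  rw [hleaving, card_empty] at this
  omega

theorem hasKPaths : ∀ {j : ℕ} {F : Finset (V × V)}, IsFlow F s t j → HasKPaths F s t j
  | 0, _, _ => ⟨Fin.elim0, fun i => i.elim0, fun i => i.elim0⟩
  | j + 1, F, hF => by
    obtain ⟨p, hp⟩ := (hF.reaches j.succ_ne_zero).exists_isRPathTo
    refine HasKPaths.cons hp (hasKPaths fun x => ?_)
    rw [netOutflow_sdiff hp.toFinset_pathEdges_subset, hF x, hp.isFlow x]
    push_cast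
    ring

theorem augment (hFE : F ⊆ E) (hF : IsFlow F s t j) {p : List V}
    (hp : IsRPathTo (residualEdges E F) s t p) : ∃ F' ⊆ E, IsFlow F' s t (j + 1) := by
  set P := (pathEdges p).toFinset
  set A := P.filter (· ∈ E \ F)
  set B := P.filter (· ∉ E \ F)
  have hPB : ∀ e ∈ B, e.swap ∈ F := fun e he => by
    obtain ⟨heP, heEF⟩ := mem_filter.1 he
    obtain ⟨f, hf, rfl⟩ := mem_image.1 <|
      (mem_union.1 (hp.toFinset_pathEdges_subset heP)).resolve_left heEF
    simpa using hf
  have hBF : B.image Prod.swap ⊆ F := fun _ he => by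
    obtain ⟨f, hf, rfl⟩ := mem_image.1 he
    exact hPB f hf
  have hAF : Disjoint (F \ B.image Prod.swap) A :=
    disjoint_right.2 fun e he heF => (mem_sdiff.1 (mem_filter.1 he).2).2 (mem_sdiff.1 heF).1
  have hAE : A ⊆ E := fun e he => (mem_sdiff.1 (mem_filter.1 he).2).1
  have hAB : ∀ x, netOutflow P x = netOutflow A x + netOutflow B x := fun x => by
    rw [← netOutflow_union (disjoint_filter_filter_not _ _ _), filter_union_filter_not_eq]
  refine ⟨(F \ B.image Prod.swap) ∪ A, union_subset (sdiff_subset.trans hFE) hAE, fun x => ?_⟩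
  have hPx := hp.isFlow x
  rw [hAB] at hPx
  rw [netOutflow_union hAF, netOutflow_sdiff hBF, netOutflow_image_swap, hF x]
  push_cast at hPx ⊢
  linarith

theorem exists_cut (hF : IsFlow F s t j) (ht : ¬Reaches (residualEdges E F) s t) :
    ∃ C ⊆ E, #C ≤ j ∧ ¬Reaches (E \ C) s t := by
  set S : Set V := {x | Reaches (residualEdges E F) s x}
  set C := E.filter fun e => e.1 ∈ S ∧ e.2 ∉ S
  have hCF : C ⊆ F.filter fun e => e.1 ∈ S ∧ e.2 ∉ S := fun e he => by
    obtain ⟨heE, he1, he2⟩ := mem_filter.1 he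
    refine mem_filter.2 ⟨?_, he1, he2⟩
    by_contra heF
    exact he2 (Relation.ReflTransGen.tail he1 (mem_union_left _ (mem_sdiff.2 ⟨heE, heF⟩)))
  have hentering : F.filter (fun e => e.1 ∉ S ∧ e.2 ∈ S) = ∅ :=
    filter_eq_empty_iff.2 fun e he h => h.1 <|
      Relation.ReflTransGen.tail h.2 (mem_union_right _ (mem_image_of_mem Prod.swap he))
  have hcard := hF.card_leaving_sub_card_entering (S := S) Relation.ReflTransGen.refl ht
  rw [hentering, card_empty, Nat.cast_zero, sub_zero, Nat.cast_inj] at hcard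
  have hclosed : ∀ x, Reaches (E \ C) s x → x ∈ S := fun x hx => by
    induction hx with
    | refl => exact Relation.ReflTransGen.refl
    | @tail y z _ hyz hy =>
      by_contra hz
      obtain ⟨hyzE, hyzC⟩ := mem_sdiff.1 hyz
      exact hyzC (mem_filter.2 ⟨hyzE, hy, hz⟩)
  exact ⟨C, filter_subset _ _, hcard ▸ card_le_card hCF, fun h => ht (hclosed t h)⟩

end IsFlow

theorem exists_isFlow_or_exists_cut (E : Finset (V × V)) (s t : V) :
    ∀ j : ℕ, (∃ F ⊆ E, IsFlow F s t j) ∨ ∃ C ⊆ E, #C < j ∧ ¬Reaches (E \ C) s t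
  | 0 => Or.inl ⟨∅, empty_subset _, fun x => by simp [netOutflow]⟩
  | j + 1 => by
    rcases exists_isFlow_or_exists_cut E s t j with ⟨F, hFE, hF⟩ | ⟨C, hCE, hC, hcut⟩
    · by_cases h : Reaches (residualEdges E F) s t
      · obtain ⟨p, hp⟩ := h.exists_isRPathTo
        exact Or.inl (hF.augment hFE hp)
      · obtain ⟨C, hCE, hC, hcut⟩ := hF.exists_cut h
        exact Or.inr ⟨C, hCE, Nat.lt_succ_of_le hC, hcut⟩
    · exact Or.inr ⟨C, hCE, Nat.lt_succ_of_lt hC, hcut⟩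

theorem exists_cut_of_not_hasKPaths {E : Finset (V × V)} {s t : V} {k : ℕ}
    (h : ¬HasKPaths E s t k) : ∃ C ⊆ E, #C < k ∧ ¬Reaches (E \ C) s t :=
  (exists_isFlow_or_exists_cut E s t k).resolve_left fun ⟨_, hFE, hF⟩ =>
    h (hF.hasKPaths.mono hFE)

end Flows

theorem kDST_minimal_local_connectivity_le_general
    {V : Type*} [DecidableEq V]
    (E : Finset (V × V)) (r : V) (T : Finset V) (k : ℕ)
    (hfeas : ∀ t ∈ T, HasKPaths E r t k)
    (hmin : ∀ e ∈ E, ∃ t ∈ T, ¬ HasKPaths (E.erase e) r t k)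
    (v : V) (hv : v ≠ r) (m : ℕ) (hm : HasKPaths E r v m) :
    m ≤ k := by
  obtain rfl | hm0 := eq_or_ne m 0
  · exact Nat.zero_le k
  obtain ⟨e, he, rfl⟩ := hm.exists_mem_snd_eq hm0 hv.symm
  obtain ⟨t, htT, ht⟩ := hmin e he
  obtain ⟨C, -, hCk, hcut⟩ := exists_cut_of_not_hasKPaths ht
  set C' := insert e C
  have hcut' : ¬Reaches (E \ C') r t := by rwa [sdiff_insert, ← erase_sdiff_comm]
  have hC'k : #C' ≤ k := (card_insert_le e C).trans hCk
  have hL : C'.filter (fun f => Reaches (E \ C') r f.1 ∧ ¬Reaches (E \ C') r f.2) = C' :=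
    eq_of_subset_of_card_le (filter_subset _ _) (hC'k.trans ((hfeas t htT).le_card_leaving hcut'))
  have heC' : e ∈ C' := mem_insert_self e C
  rw [← hL] at heC'
  exact (hm.le_card_leaving (mem_filter.1 heC').2.2).trans ((card_filter_le _ _).trans hC'k)

/-- If `H` (edge set `E`) has `k` edge-disjoint `r→t` paths for every terminal `t ∈ T`,
and is edge-minimal with this property, then for every vertex `v ≠ r`, at most `k`
edge-disjoint `r→v` paths exist in `H`. -/
theorem kDST_minimal_local_connectivity_le
    {V : Type*} [Fintype V] [DecidableEq V]
    (E : Finset (V × V)) (r : V) (T : Finset V) (k : ℕ)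
    (hfeas : ∀ t ∈ T, HasKPaths E r t k)
    (hmin : ∀ e ∈ E, ∃ t ∈ T, ¬ HasKPaths (E.erase e) r t k)
    (v : V) (hv : v ≠ r) (m : ℕ) (hm : HasKPaths E r v m) :
    m ≤ k :=
  kDST_minimal_local_connectivity_le_general E r T k hfeas hmin v hv m hm
end

section
/- Let H be an edge-minimal feasible solution to k-DST. Then every vertex of H has in-degree at most k. -/
open scoped Classical

/-- In-degree of a vertex `v` in the edge set `E`. -/
def inDeg {V : Type*} [DecidableEq V] (E : Finset (V × V)) (v : V) : ℕ :=
  (E.filter (fun e => e.2 = v)).card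

/-- In-degree of a vertex set `S`: number of edges entering `S` from outside. -/
def inDegS {V : Type*} [DecidableEq V] (E : Finset (V × V)) (S : Finset V) : ℕ :=
  (E.filter (fun e => e.1 ∉ S ∧ e.2 ∈ S)).card

/-- The maximum number of pairwise edge-disjoint `s→v` paths in `E`. -/
noncomputable def maxConn {V : Type*} (E : Finset (V × V)) (s v : V) : ℕ :=
  sSup {m : ℕ | HasKPaths E s v m}

/-
If more than `k` edges entered `v`, then each of them, being critical for some terminal `t`,
would by Menger's theorem enter a tight cut: a vertex set avoiding `r`, containing `t`, of
in-degree `k`. The in-degree of vertex sets is submodular, and the union of two such cuts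
still separates `r` from a terminal, so has in-degree at least `k`; hence the intersection of
tight cuts containing `v` again has in-degree at most `k`. Intersecting the cuts of all edges
entering `v` yields one cut of in-degree at most `k` entered by more than `k` edges.

Menger's theorem is obtained from unit-capacity flows: augmenting paths either increase the
flow or exhibit a small cut, and a flow of value `k` decomposes into `k` edge-disjoint paths.
-/

open Finset

namespace KDST

section Paths

variable {V : Type*}

theorem pathEdges_cons_cons (x y : V) (l : List V) :
    pathEdges (x :: y :: l) = (x, y) :: pathEdges (y :: l) := rfl

theorem mem_of_mem_pathEdges {e : V × V} {p : List V} (h : e ∈ pathEdges p) :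
    e.1 ∈ p ∧ e.2 ∈ p :=
  have h' := List.of_mem_zip h
  ⟨h'.1, List.mem_of_mem_tail h'.2⟩

theorem rel_of_mem_pathEdges {R : V → V → Prop} {e : V × V} {p : List V}
    (hc : p.IsChain R) (h : e ∈ pathEdges p) : R e.1 e.2 := by
  induction p with
  | nil => simp [pathEdges] at h
  | cons x q ih =>
    cases q with
    | nil => simp [pathEdges] at h
    | cons y l =>
      rcases List.mem_cons.1 h with rfl | h
      · exact hc.rel
      · exact ih hc.tail h

theorem IsRPath.mem_of_mem_pathEdges {E : Finset (V × V)} {s : V} {p : List V}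
    (hp : IsRPath E s p) {e : V × V} (he : e ∈ pathEdges p) : e ∈ E :=
  rel_of_mem_pathEdges hp.2.1 he

theorem exists_mem_pathEdges_crossing {S : Set V} {p : List V} {a b : V}
    (hh : p.head? = some a) (hl : p.getLast? = some b) (ha : a ∉ S) (hb : b ∈ S) :
    ∃ e ∈ pathEdges p, e.1 ∉ S ∧ e.2 ∈ S := by
  induction p generalizing a with
  | nil => simp at hh
  | cons x q ih =>
    obtain rfl : x = a := by simpa using hh
    cases q with
    | nil =>
      obtain rfl : x = b := by simpa using hl
      exact absurd hb ha
    | cons y l =>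
      by_cases hy : y ∈ S
      · exact ⟨(x, y), List.mem_cons_self, ha, hy⟩
      · obtain ⟨e, he, h1, h2⟩ := ih rfl (by simpa using hl) hy
        exact ⟨e, List.mem_cons_of_mem _ he, h1, h2⟩

theorem isRPathTo_singleton (E : Finset (V × V)) (r : V) : IsRPathTo E r r [r] :=
  ⟨⟨List.nodup_singleton r, List.isChain_singleton r, rfl⟩, rfl⟩

/-- Append `y`, or cut the path at `y` if it already passes through `y`. -/
theorem IsRPathTo.exists_of_mem {E : Finset (V × V)} {r x y : V} {p : List V}
    (hp : IsRPathTo E r x p) (hxy : (x, y) ∈ E) : ∃ q, IsRPathTo E r y q := by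
  obtain ⟨⟨hnd, hc, hh⟩, hl⟩ := hp
  have hne : p ≠ [] := by rintro rfl; simp at hh
  by_cases hy : y ∈ p
  · obtain ⟨s, t, rfl⟩ := List.append_of_mem hy
    have hpre : (s ++ [y]) <+: (s ++ y :: t) := ⟨t, by simp⟩
    refine ⟨s ++ [y], ⟨hnd.sublist hpre.sublist, hc.prefix hpre, ?_⟩, by simp⟩
    rw [← hh]
    cases s <;> rfl
  · refine ⟨p ++ [y], ⟨?_, ?_, ?_⟩, by simp⟩
    · refine List.nodup_append.2 ⟨hnd, List.nodup_singleton y, ?_⟩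
      simp only [List.mem_singleton]
      rintro a ha b rfl rfl
      exact hy ha
    · refine hc.append (List.isChain_singleton y) ?_
      intro a ha b hb
      rw [hl, Option.mem_some_iff] at ha
      rw [List.head?_singleton, Option.mem_some_iff] at hb
      exact ha ▸ hb ▸ hxy
    · rw [List.head?_append_of_ne_nil _ hne, hh]

theorem exists_cut_of_forall_not_isRPathTo [Fintype V] {E : Finset (V × V)} {r t : V}
    (h : ∀ p, ¬ IsRPathTo E r t p) :
    ∃ S : Finset V, r ∉ S ∧ t ∈ S ∧ ∀ e ∈ E, e.2 ∈ S → e.1 ∈ S := by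
  refine ⟨univ.filter fun x => ∀ p, ¬ IsRPathTo E r x p, ?_, by simpa using h, ?_⟩
  · simpa using ⟨[r], isRPathTo_singleton E r⟩
  · intro e he h2
    rw [mem_filter] at h2 ⊢
    exact ⟨mem_univ _, fun p hp => (IsRPathTo.exists_of_mem hp he).elim h2.2⟩

theorem IsRPathTo.mono {E F : Finset (V × V)} {r t : V} {p : List V} (hp : IsRPathTo F r t p)
    (hFE : F ⊆ E) : IsRPathTo E r t p :=
  ⟨⟨hp.1.1, hp.1.2.1.imp fun _ _ hab => hFE hab, hp.1.2.2⟩, hp.2⟩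

theorem HasKPaths.mono {E F : Finset (V × V)} {r t : V} {k : ℕ} (h : HasKPaths F r t k)
    (hFE : F ⊆ E) : HasKPaths E r t k :=
  let ⟨P, hP, hdisj⟩ := h
  ⟨P, fun i => IsRPathTo.mono (hP i) hFE, hdisj⟩

theorem hasKPaths_self (E : Finset (V × V)) (r : V) (k : ℕ) : HasKPaths E r r k :=
  ⟨fun _ => [r], fun _ => isRPathTo_singleton E r, fun _ _ _ e he => by simp [pathEdges] at he⟩

variable [DecidableEq V]

theorem HasKPaths.succ {E : Finset (V × V)} {r t : V} {k : ℕ} {p : List V}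
    (hp : IsRPathTo E r t p) (h : HasKPaths (E \ (pathEdges p).toFinset) r t k) :
    HasKPaths E r t (k + 1) := by
  obtain ⟨P, hP, hdisj⟩ := h
  have hfresh : ∀ i, ∀ e ∈ pathEdges (P i), e ∉ pathEdges p := fun i e he hep =>
    (mem_sdiff.1 (IsRPath.mem_of_mem_pathEdges (hP i).1 he)).2 (List.mem_toFinset.2 hep)
  refine ⟨Fin.cons p P, Fin.cases hp fun i => IsRPathTo.mono (hP i) sdiff_subset, ?_⟩
  intro i j hij e hi hj
  cases i using Fin.cases <;> cases j using Fin.cases <;>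
    simp only [Fin.cons_zero, Fin.cons_succ] at hi hj
  · exact hij rfl
  · exact hfresh _ e hj hi
  · exact hfresh _ e hi hj
  · exact hdisj _ _ (fun h => hij (congrArg Fin.succ h)) e hi hj

theorem le_inDegS_of_hasKPaths {E : Finset (V × V)} {r t : V} {k : ℕ} {S : Finset V}
    (h : HasKPaths E r t k) (hr : r ∉ S) (ht : t ∈ S) : k ≤ inDegS E S := by
  obtain ⟨P, hP, hdisj⟩ := h
  choose g hgP hg using fun i =>
    exists_mem_pathEdges_crossing (S := ↑S) (hP i).1.2.2 (hP i).2 hr ht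
  calc k = #(univ : Finset (Fin k)) := (card_fin k).symm
    _ ≤ inDegS E S := by
      refine card_le_card_of_injOn g (fun i _ => mem_filter.2
        ⟨IsRPath.mem_of_mem_pathEdges (hP i).1 (hgP i), hg i⟩) fun i _ j _ hij => ?_
      by_contra hne
      exact hdisj i j hne (g i) (hgP i) (hij ▸ hgP j)

theorem inDegS_inter_add_inDegS_union_le (E : Finset (V × V)) (A B : Finset V) :
    inDegS E (A ∩ B) + inDegS E (A ∪ B) ≤ inDegS E A + inDegS E B := by
  simp only [inDegS, card_filter, ← sum_add_distrib]
  refine sum_le_sum fun e _ => ?_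
  by_cases h1 : e.1 ∈ A <;> by_cases h2 : e.1 ∈ B <;>
    by_cases h3 : e.2 ∈ A <;> by_cases h4 : e.2 ∈ B <;>
    simp [h1, h2, h3, h4]

theorem inDegS_le_inDegS_erase_add_one (E : Finset (V × V)) (e : V × V) (S : Finset V) :
    inDegS E S ≤ inDegS (E.erase e) S + 1 := by
  rw [inDegS, inDegS, filter_erase]
  have := pred_card_le_card_erase (s := E.filter fun e => e.1 ∉ S ∧ e.2 ∈ S) (a := e)
  omega

theorem inDegS_erase_of_not_crossing {E : Finset (V × V)} {e : V × V} {S : Finset V}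
    (h : ¬(e.1 ∉ S ∧ e.2 ∈ S)) : inDegS (E.erase e) S = inDegS E S := by
  rw [inDegS, inDegS, filter_erase, erase_eq_of_notMem]
  exact fun he => h (mem_filter.1 he).2

end Paths

section Flows

variable {V : Type*} [DecidableEq V]

def incidence (e : V × V) (w : V) : ℤ :=
  (if e.2 = w then 1 else 0) - (if e.1 = w then 1 else 0)

theorem incidence_swap (e : V × V) (w : V) : incidence e.swap w = -incidence e w := by
  simp only [incidence, Prod.fst_swap, Prod.snd_swap]
  ring

def excess (F : Finset (V × V)) (w : V) : ℤ := ∑ e ∈ F, incidence e w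

theorem sum_excess (F : Finset (V × V)) (S : Finset V) :
    ∑ w ∈ S, excess F w = inDegS F S - #(F.filter fun e => e.1 ∈ S ∧ e.2 ∉ S) := by
  have hsum : ∀ e : V × V, ∑ w ∈ S, incidence e w =
      (if e.1 ∉ S ∧ e.2 ∈ S then 1 else 0) - (if e.1 ∈ S ∧ e.2 ∉ S then 1 else 0) := by
    intro e
    simp only [incidence]
    rw [sum_sub_distrib, sum_ite_eq S e.2, sum_ite_eq S e.1]
    by_cases h1 : e.1 ∈ S <;> by_cases h2 : e.2 ∈ S <;> simp [h1, h2]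
  simp only [excess, inDegS]
  rw [sum_comm, sum_congr rfl fun e _ => hsum e, sum_sub_distrib, card_filter, card_filter]
  push_cast
  rfl

theorem excess_pathEdges {p : List V} {r t : V} (hnd : p.Nodup) (hh : p.head? = some r)
    (hl : p.getLast? = some t) (w : V) :
    excess (pathEdges p).toFinset w = (if w = t then 1 else 0) - (if w = r then 1 else 0) := by
  induction p generalizing r with
  | nil => simp at hh
  | cons x q ih =>
    obtain rfl : x = r := by simpa using hh
    cases q with
    | nil =>
      obtain rfl : x = t := by simpa using hl
      simp [pathEdges, excess]
    | cons y l =>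
      obtain ⟨hx, hnd⟩ := List.nodup_cons.1 hnd
      have hxy : (x, y) ∉ pathEdges (y :: l) := fun h => hx (mem_of_mem_pathEdges h).1
      have hxt : x ≠ t := by
        rintro rfl
        exact hx (List.mem_of_getLast? (by simpa using hl))
      rw [pathEdges_cons_cons, List.toFinset_cons, excess,
        sum_insert (by simpa using hxy), ← excess, ih hnd rfl (by simpa using hl), incidence]
      split_ifs <;> simp_all

def residual (E F : Finset (V × V)) : Finset (V × V) := (E \ F) ∪ F.image Prod.swap

/-- Push one unit of flow along each edge of `P`, forward through an unused edge of `E` where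
possible and otherwise backward along an edge of `F`. -/
def augment (E F P : Finset (V × V)) : Finset (V × V) :=
  (F \ (P.filter (· ∉ E \ F)).image Prod.swap) ∪ P.filter (· ∈ E \ F)

theorem excess_augment {E F P : Finset (V × V)} (hP : P ⊆ residual E F) (w : V) :
    excess (augment E F P) w = excess F w + excess P w := by
  have hback : (P.filter (· ∉ E \ F)).image Prod.swap ⊆ F := by
    simp only [subset_iff, mem_image, mem_filter]
    rintro _ ⟨s, ⟨hsP, hs⟩, rfl⟩
    obtain h | ⟨e, he, rfl⟩ := mem_union.1 (mem_of_subset hP hsP) |>.imp_right mem_image.1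
    · exact absurd h hs
    · simpa using he
  have hdisj : Disjoint (F \ (P.filter (· ∉ E \ F)).image Prod.swap) (P.filter (· ∈ E \ F)) :=
    disjoint_left.2 fun e he hfw => (mem_sdiff.1 (mem_filter.1 hfw).2).2 (mem_sdiff.1 he).1
  rw [augment, excess, sum_union hdisj, sum_sdiff_eq_sub hback,
    sum_image fun a _ b _ h => Prod.swap_injective h]
  simp only [incidence_swap, sum_neg_distrib, excess]
  rw [← sum_filter_add_sum_filter_not P (· ∈ E \ F)]
  ring

theorem augment_subset {E F P : Finset (V × V)} (hF : F ⊆ E) : augment E F P ⊆ E :=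
  union_subset (sdiff_subset.trans hF) fun _ he => (mem_sdiff.1 (mem_filter.1 he).2).1

/-- An integral unit-capacity `r`-`t` flow of value `k` in `E`, represented by the set `F` of
edges it uses. -/
def IsFlow (E : Finset (V × V)) (r t : V) (F : Finset (V × V)) (k : ℕ) : Prop :=
  F ⊆ E ∧ (∀ w, w ≠ r → w ≠ t → excess F w = 0) ∧ excess F t = k

theorem isFlow_empty (E : Finset (V × V)) (r t : V) : IsFlow E r t ∅ 0 :=
  ⟨empty_subset _, fun _ _ _ => sum_empty, sum_empty⟩

theorem IsFlow.inDegS_sub_eq {E F : Finset (V × V)} {r t : V} {k : ℕ} (hF : IsFlow E r t F k)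
    {S : Finset V} (hr : r ∉ S) (ht : t ∈ S) :
    (inDegS F S : ℤ) - #(F.filter fun e => e.1 ∈ S ∧ e.2 ∉ S) = k := by
  rw [← sum_excess, ← hF.2.2]
  exact sum_eq_single_of_mem t ht fun w hw hwt => hF.2.1 w (ne_of_mem_of_not_mem hw hr) hwt

theorem IsFlow.augment {E F : Finset (V × V)} {r t : V} {m : ℕ} (hF : IsFlow E r t F m)
    (hrt : r ≠ t) {p : List V} (hp : IsRPathTo (residual E F) r t p) :
    IsFlow E r t (augment E F (pathEdges p).toFinset) (m + 1) := by
  have hP : (pathEdges p).toFinset ⊆ residual E F := fun e he =>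
    IsRPath.mem_of_mem_pathEdges hp.1 (List.mem_toFinset.1 he)
  refine ⟨augment_subset hF.1, fun w hwr hwt => ?_, ?_⟩
  · rw [excess_augment hP, excess_pathEdges hp.1.1 hp.1.2.2 hp.2, hF.2.1 w hwr hwt]
    simp [hwr, hwt]
  · rw [excess_augment hP, excess_pathEdges hp.1.1 hp.1.2.2 hp.2, hF.2.2]
    simp [Ne.symm hrt]

theorem IsFlow.sdiff_pathEdges {E F : Finset (V × V)} {r t : V} {k : ℕ}
    (hF : IsFlow E r t F (k + 1)) (hrt : r ≠ t) {p : List V} (hp : IsRPathTo F r t p) :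
    IsFlow E r t (F \ (pathEdges p).toFinset) k := by
  have hsub : ∀ w, excess (F \ (pathEdges p).toFinset) w =
      excess F w - excess (pathEdges p).toFinset w := fun w =>
    sum_sdiff_eq_sub fun e he => IsRPath.mem_of_mem_pathEdges hp.1 (List.mem_toFinset.1 he)
  refine ⟨sdiff_subset.trans hF.1, fun w hwr hwt => ?_, ?_⟩
  · rw [hsub, hF.2.1 w hwr hwt, excess_pathEdges hp.1.1 hp.1.2.2 hp.2]
    simp [hwr, hwt]
  · rw [hsub, hF.2.2, excess_pathEdges hp.1.1 hp.1.2.2 hp.2]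
    simp [Ne.symm hrt]

variable [Fintype V]

theorem IsFlow.exists_isRPathTo {E F : Finset (V × V)} {r t : V} {k : ℕ}
    (hF : IsFlow E r t F (k + 1)) : ∃ p, IsRPathTo F r t p := by
  by_contra! h
  obtain ⟨S, hr, ht, hclosed⟩ := exists_cut_of_forall_not_isRPathTo h
  have hin : inDegS F S = 0 :=
    card_eq_zero.2 (filter_eq_empty_iff.2 fun e he h' => h'.1 (hclosed e he h'.2))
  have := hF.inDegS_sub_eq hr ht
  omega

theorem IsFlow.hasKPaths {E F : Finset (V × V)} {r t : V} {k : ℕ} (hF : IsFlow E r t F k)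
    (hrt : r ≠ t) : HasKPaths F r t k := by
  induction k generalizing F with
  | zero => exact ⟨Fin.elim0, fun i => i.elim0, fun i => i.elim0⟩
  | succ k ih =>
    obtain ⟨p, hp⟩ := hF.exists_isRPathTo
    exact HasKPaths.succ hp (ih (hF.sdiff_pathEdges hrt hp))

/-- Without an augmenting path, the vertices unreachable in the residual graph form a cut whose
entering edges are all saturated and whose leaving edges are all unused. -/
theorem IsFlow.exists_succ_or_cut {E F : Finset (V × V)} {r t : V} {m : ℕ}
    (hF : IsFlow E r t F m) (hrt : r ≠ t) :
    (∃ F', IsFlow E r t F' (m + 1)) ∨ ∃ S, r ∉ S ∧ t ∈ S ∧ inDegS E S ≤ m := by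
  by_cases hp : ∃ p, IsRPathTo (residual E F) r t p
  · obtain ⟨p, hp⟩ := hp
    exact .inl ⟨_, hF.augment hrt hp⟩
  simp only [not_exists] at hp
  obtain ⟨S, hr, ht, hclosed⟩ := exists_cut_of_forall_not_isRPathTo hp
  have hsat : inDegS E S ≤ inDegS F S := by
    refine card_le_card fun e he => ?_
    rw [mem_filter] at he ⊢
    refine ⟨by_contra fun heF => he.2.1 (hclosed e ?_ he.2.2), he.2⟩
    exact mem_union_left _ (mem_sdiff.2 ⟨he.1, heF⟩)
  have hunused : #(F.filter fun e => e.1 ∈ S ∧ e.2 ∉ S) = 0 :=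
    card_eq_zero.2 <| filter_eq_empty_iff.2 fun e he h =>
      h.2 (hclosed e.swap (mem_union_right _ (mem_image_of_mem _ he)) h.1)
  have := hF.inDegS_sub_eq hr ht
  exact .inr ⟨S, hr, ht, by omega⟩

theorem exists_isFlow_or_cut (E : Finset (V × V)) {r t : V} (hrt : r ≠ t) (m : ℕ) :
    (∃ F, IsFlow E r t F m) ∨ ∃ S, r ∉ S ∧ t ∈ S ∧ inDegS E S < m := by
  induction m with
  | zero => exact .inl ⟨∅, isFlow_empty E r t⟩
  | succ m ih =>
    obtain ⟨F, hF⟩ | ⟨S, hr, ht, hS⟩ := ih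
    · exact (hF.exists_succ_or_cut hrt).imp_right fun ⟨S, hr, ht, hS⟩ =>
        ⟨S, hr, ht, Nat.lt_succ_of_le hS⟩
    · exact .inr ⟨S, hr, ht, hS.trans (Nat.lt_succ_self m)⟩

theorem exists_inDegS_lt_of_not_hasKPaths {E : Finset (V × V)} {r t : V} {k : ℕ}
    (h : ¬ HasKPaths E r t k) : ∃ S, r ∉ S ∧ t ∈ S ∧ inDegS E S < k := by
  have hrt : r ≠ t := by
    rintro rfl
    exact h (hasKPaths_self E r k)
  obtain ⟨F, hF⟩ | hcut := exists_isFlow_or_cut E hrt k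
  · exact absurd (HasKPaths.mono (hF.hasKPaths hrt) hF.1) h
  · exact hcut

end Flows

section TightCuts

variable {V : Type*} [DecidableEq V] {E : Finset (V × V)} {r : V} {k : ℕ}

theorem exists_tight_cut_of_not_hasKPaths_erase [Fintype V] {t : V} {e : V × V}
    (ht : HasKPaths E r t k) (hcrit : ¬ HasKPaths (E.erase e) r t k) :
    ∃ S, r ∉ S ∧ t ∈ S ∧ inDegS E S ≤ k ∧ e.1 ∉ S ∧ e.2 ∈ S := by
  obtain ⟨S, hr, htS, hlt⟩ := exists_inDegS_lt_of_not_hasKPaths hcrit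
  have hk := le_inDegS_of_hasKPaths ht hr htS
  have hcross : e.1 ∉ S ∧ e.2 ∈ S := by
    by_contra hnc
    rw [← inDegS_erase_of_not_crossing hnc] at hk
    omega
  exact ⟨S, hr, htS, by linarith [inDegS_le_inDegS_erase_add_one E e S], hcross⟩

theorem inDegS_inter_le {A B : Finset V} {t : V} (ht : HasKPaths E r t k) (hrA : r ∉ A)
    (hrB : r ∉ B) (htB : t ∈ B) (hA : inDegS E A ≤ k) (hB : inDegS E B ≤ k) :
    inDegS E (A ∩ B) ≤ k := by
  have hunion : k ≤ inDegS E (A ∪ B) :=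
    le_inDegS_of_hasKPaths ht (by simp [hrA, hrB]) (mem_union_right _ htB)
  linarith [inDegS_inter_add_inDegS_union_le E A B]

theorem exists_cut_entered_by_all {D : Finset (V × V)} (hD : D.Nonempty) {v : V}
    (hv : ∀ e ∈ D, e.2 = v)
    (hcut : ∀ e ∈ D, ∃ t S, HasKPaths E r t k ∧ r ∉ S ∧ t ∈ S ∧ inDegS E S ≤ k ∧
      e.1 ∉ S ∧ e.2 ∈ S) :
    ∃ S, r ∉ S ∧ inDegS E S ≤ k ∧ ∀ e ∈ D, e.1 ∉ S ∧ e.2 ∈ S := by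
  induction hD using Finset.Nonempty.cons_induction with
  | singleton a =>
    obtain ⟨t, S, -, hr, -, hS, ha⟩ := hcut a (mem_singleton_self a)
    exact ⟨S, hr, hS, fun e he => mem_singleton.1 he ▸ ha⟩
  | cons a D ha hD ih =>
    obtain ⟨t, A, ht, hrA, htA, hA, haA⟩ := hcut a (mem_cons_self a D)
    obtain ⟨B, hrB, hB, hDB⟩ := ih (fun e he => hv e (mem_cons_of_mem he))
      (fun e he => hcut e (mem_cons_of_mem he))
    have hvA : v ∈ A := hv a (mem_cons_self a D) ▸ haA.2
    have hvB : v ∈ B := by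
      obtain ⟨e, he⟩ := hD
      exact hv e (mem_cons_of_mem he) ▸ (hDB e he).2
    refine ⟨B ∩ A, fun h => hrB (mem_inter.1 h).1, inDegS_inter_le ht hrB hrA htA hB hA, ?_⟩
    intro e he
    have hev : e.2 = v := hv e he
    rcases mem_cons.1 he with rfl | he
    · exact ⟨fun h => haA.1 (mem_inter.1 h).2, mem_inter.2 ⟨hev ▸ hvB, haA.2⟩⟩
    · exact ⟨fun h => (hDB e he).1 (mem_inter.1 h).1,
        mem_inter.2 ⟨(hDB e he).2, hev ▸ hvA⟩⟩

end TightCuts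

end KDST

/-- In an edge-minimal feasible solution to `k`-DST, every vertex has in-degree at most `k`. -/
theorem kDST_minimal_indeg_le
    {V : Type*} [Fintype V] [DecidableEq V]
    (E : Finset (V × V)) (r : V) (T : Finset V) (k : ℕ)
    (hfeas : ∀ t ∈ T, HasKPaths E r t k)
    (hmin : ∀ e ∈ E, ∃ t ∈ T, ¬ HasKPaths (E.erase e) r t k)
    (v : V) :
    inDeg E v ≤ k := by
  set D := E.filter fun e => e.2 = v
  obtain hD | hD := D.eq_empty_or_nonempty
  · simp [inDeg, D, hD]
  have hcut : ∀ e ∈ D, ∃ t S, HasKPaths E r t k ∧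
      r ∉ S ∧ t ∈ S ∧ inDegS E S ≤ k ∧ e.1 ∉ S ∧ e.2 ∈ S := by
    intro e he
    obtain ⟨t, htT, hcrit⟩ := hmin e (mem_filter.1 he).1
    exact ⟨t, KDST.exists_tight_cut_of_not_hasKPaths_erase (hfeas t htT) hcrit |>.imp
      fun _ hS => ⟨hfeas t htT, hS⟩⟩
  obtain ⟨S, -, hS, hDS⟩ :=
    KDST.exists_cut_entered_by_all hD (fun e he => (mem_filter.1 he).2) hcut
  calc inDeg E v = #D := rfl
    _ ≤ inDegS E S := card_le_card fun e he => mem_filter.2 ⟨(mem_filter.1 he).1, hDS e he⟩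
    _ ≤ k := hS
end

section
/- Let G be a directed graph with root r, and suppose a vertex v has λ(v) edge-disjoint r→v paths (λ the max such number) while indeg(v) > λ(v). If U is an inclusion-minimal vertex set with v ∈ U, r ∉ U, indeg(U) = λ(v), then there exists an edge uv ∈ E(G) with both endpoints in U. -/
open scoped Classical

/-- If `indeg(v) > λ(v)` and `U` is an inclusion-minimal vertex set with `v ∈ U`,
`r ∉ U` and `indeg(U) = λ(v)`, then some edge into `v` has its tail inside `U`. -/
theorem exists_edge_inside_min_cut
    {V : Type*} [Fintype V] [DecidableEq V]
    (E : Finset (V × V)) (r v : V) (hrv : r ≠ v)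
    (lam : ℕ) (hlam : lam = maxConn E r v)
    (hdeg : lam < inDeg E v)
    (U : Finset V) (hvU : v ∈ U) (hrU : r ∉ U) (hU : inDegS E U = lam)
    (hminU : ∀ U' ⊆ U, v ∈ U' → r ∉ U' → inDegS E U' = lam → U' = U) :
    ∃ u ∈ U, (u, v) ∈ E := by
  by_contra h
  push_neg at h
  have hsub : E.filter (fun e => e.2 = v) ⊆ E.filter (fun e => e.1 ∉ U ∧ e.2 ∈ U) := by
    intro e he
    simp only [Finset.mem_filter] at he ⊢
    obtain ⟨heE, hev⟩ := he
    refine ⟨heE, fun h1 => h e.1 h1 ?_, hev ▸ hvU⟩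
    have : e = (e.1, v) := by rw [← hev]
    exact this ▸ heE
  have := Finset.card_le_card hsub
  rw [show (E.filter (fun e => e.1 ∉ U ∧ e.2 ∈ U)).card = inDegS E U from rfl] at this
  rw [hU] at this
  have hd : inDeg E v ≤ lam := by simpa [inDeg] using this
  omega
end

section
/- Let G be a directed graph with root r (no incoming edges at r) and let 𝒢 be the path-suffix tree of G with edge {p, p+e} assigned cost c_e. Then for every subgraph H of G that is an out-arborescence rooted at r, there is a subtree of 𝒢 containing the root (r) whose total cost equals the total cost of H, and which contains, for each vertex v of H, a vertex of 𝒢 corresponding to the unique r→v path in H. -/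
/-!
If every vertex of `H` other than `r` has exactly one incoming edge and none enters `r`, then
every vertex of `H` has a unique `r`-path in `H`. Taking these paths, one for the head of each
edge of `H`, together with the trivial path `[r]`, gives exactly the set of all `r`-paths in
`H`; it is prefix closed, and the path ending with the edge `(u, v)` contributes `c (u, v)`, so
its total cost is that of `H`.
-/

open scoped Classical

/-- The cost of the last edge of a vertex list (0 for lists with at most one vertex). -/
def lastEdgeCost {V : Type*} (c : V × V → ℝ) (p : List V) : ℝ :=
  ((pathEdges p).getLast?.map c).getD 0

/-- `v` is a vertex of the edge set `H`. -/
def InVerts {V : Type*} (H : Finset (V × V)) (v : V) : Prop :=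
  ∃ e ∈ H, e.1 = v ∨ e.2 = v

section Paths

variable {V : Type*} {E : Finset (V × V)} {s t : V} {p q : List V}

lemma pathEdges_append_singleton (p : List V) (x : V) (h : p ≠ []) :
    pathEdges (p ++ [x]) = pathEdges p ++ [(p.getLast h, x)] := by
  induction p with
  | nil => simp at h
  | cons a l ih =>
    cases l with
    | nil => simp [pathEdges]
    | cons b l' =>
      have := ih (by simp)
      simp only [pathEdges, List.cons_append, List.zip_cons_cons, List.tail_cons] at this ⊢
      rw [this]
      simp [List.getLast_cons]

lemma lastEdgeCost_append_singleton (c : V × V → ℝ) {u x : V} (h : p.getLast? = some u) :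
    lastEdgeCost c (p ++ [x]) = c (u, x) := by
  have hp : p ≠ [] := by rintro rfl; simp at h
  rw [List.getLast?_eq_some_getLast hp, Option.some_inj] at h
  simp [lastEdgeCost, pathEdges_append_singleton p x hp, h]

lemma IsRPath.mono {F : Finset (V × V)} (hEF : E ⊆ F) (hp : IsRPath E s p) : IsRPath F s p :=
  ⟨hp.1, hp.2.1.imp fun _ _ h => hEF h, hp.2.2⟩

lemma isRPathTo_singleton : IsRPathTo E s s [s] :=
  ⟨⟨List.nodup_singleton s, List.isChain_singleton s, rfl⟩, rfl⟩

lemma IsRPathTo.eq_singleton (hp : IsRPathTo E s s p) : p = [s] := by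
  obtain ⟨⟨hnd, -, hhd⟩, hlast⟩ := hp
  rw [List.eq_cons_of_mem_head? hhd] at hnd hlast ⊢
  cases htl : p.tail with
  | nil => rfl
  | cons b l =>
    rw [htl, List.getLast?_cons_cons] at hlast
    rw [htl] at hnd
    exact absurd (List.mem_of_getLast? hlast) (List.nodup_cons.mp hnd).1

lemma IsRPathTo.of_append_singleton {x : V} (h : IsRPathTo E s t (p ++ [x])) (hp : p ≠ []) :
    ∃ u, IsRPathTo E s u p ∧ (u, x) ∈ E := by
  obtain ⟨⟨hnd, hch, hhd⟩, -⟩ := h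
  rw [List.Chain', List.isChain_append] at hch
  refine ⟨p.getLast hp, ⟨⟨(List.nodup_append.mp hnd).1, hch.1, ?_⟩, ?_⟩, ?_⟩
  · rwa [List.head?_append_of_ne_nil _ hp] at hhd
  · exact List.getLast?_eq_some_getLast hp
  · exact hch.2.2 _ (List.getLast?_eq_some_getLast hp) _ rfl

lemma IsRPathTo.exists_eq_append_singleton (hp : IsRPathTo E s t p) (ht : t ≠ s) :
    ∃ q u, p = q ++ [t] ∧ IsRPathTo E s u q ∧ (u, t) ∈ E := by
  have hne : p ≠ [] := by rintro rfl; simp [IsRPathTo, IsRPath] at hp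
  have hsplit : p = p.dropLast ++ [t] := by
    have hlast := hp.2
    rw [List.getLast?_eq_some_getLast hne, Option.some_inj] at hlast
    rw [← hlast, List.dropLast_append_getLast]
  have hq : p.dropLast ≠ [] := by
    intro h
    have hhd := hp.1.2.2
    rw [hsplit, h] at hhd
    exact ht (by simpa using hhd)
  obtain ⟨u, hu, hut⟩ := (hsplit ▸ hp).of_append_singleton hq
  exact ⟨p.dropLast, u, hsplit, hu, hut⟩

theorem IsRPathTo.eq_of_pred_unique (hpred : ∀ u w v, (u, v) ∈ E → (w, v) ∈ E → u = w)
    (hp : IsRPathTo E s t p) (hq : IsRPathTo E s t q) : p = q := by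
  induction p using List.reverseRecOn generalizing t q with
  | nil => simp [IsRPathTo, IsRPath] at hp
  | append_singleton p x ih =>
    by_cases ht : t = s
    · subst ht
      rw [hp.eq_singleton, hq.eq_singleton]
    obtain ⟨p', u, hpp', hp', hu⟩ := hp.exists_eq_append_singleton ht
    obtain ⟨q', w, rfl, hq', hw⟩ := hq.exists_eq_append_singleton ht
    obtain ⟨rfl, hxt⟩ := List.append_inj' hpp' rfl
    obtain rfl := hpred u w t hu hw
    rw [ih hp' hq', hxt]

end Paths

lemma eq_of_inDeg_eq_one {V : Type*} [DecidableEq V] {H : Finset (V × V)} {u w v : V}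
    (h : inDeg H v = 1) (hu : (u, v) ∈ H) (hw : (w, v) ∈ H) : u = w := by
  simpa using Finset.card_le_one.mp h.le (u, v) (by simp [hu]) (w, v) (by simp [hw])

section Arborescence

variable {V : Type*} [DecidableEq V] {H : Finset (V × V)} {r : V} {P : V → List V}

def arborescencePaths (H : Finset (V × V)) (r : V) (P : V → List V) : Finset (List V) :=
  insert [r] (H.image fun e => P e.2)

theorem mem_arborescencePaths_iff (hpred : ∀ u w v, (u, v) ∈ H → (w, v) ∈ H → u = w)
    (hP : ∀ v, InVerts H v → IsRPathTo H r v (P v)) {p : List V} :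
    p ∈ arborescencePaths H r P ↔ ∃ v, IsRPathTo H r v p := by
  constructor
  · intro hp
    rcases Finset.mem_insert.mp hp with rfl | hp
    · exact ⟨r, isRPathTo_singleton⟩
    · obtain ⟨e, he, rfl⟩ := Finset.mem_image.mp hp
      exact ⟨e.2, hP e.2 ⟨e, he, Or.inr rfl⟩⟩
  · rintro ⟨v, hp⟩
    by_cases hv : v = r
    · subst hv
      rw [hp.eq_singleton]
      exact Finset.mem_insert_self _ _
    obtain ⟨-, u, -, -, hu⟩ := hp.exists_eq_append_singleton hv
    have hPv := (hP v ⟨(u, v), hu, Or.inr rfl⟩).eq_of_pred_unique hpred hp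
    exact Finset.mem_insert_of_mem (Finset.mem_image.mpr ⟨(u, v), hu, hPv⟩)

theorem sum_lastEdgeCost_arborescencePaths (c : V × V → ℝ)
    (hpred : ∀ u w v, (u, v) ∈ H → (w, v) ∈ H → u = w) (hrH : ∀ u, (u, r) ∉ H)
    (hP : ∀ v, InVerts H v → IsRPathTo H r v (P v)) :
    ∑ p ∈ arborescencePaths H r P, lastEdgeCost c p = ∑ e ∈ H, c e := by
  have hPe : ∀ e ∈ H, IsRPathTo H r e.2 (P e.2) := fun e he => hP e.2 ⟨e, he, Or.inr rfl⟩
  rw [arborescencePaths, Finset.sum_insert_of_eq_zero_if_notMem (f := lastEdgeCost c) fun _ => rfl,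
    Finset.sum_image]
  · refine Finset.sum_congr rfl ?_
    rintro ⟨u, v⟩ he
    obtain ⟨q, w, hq_eq, hq, hw⟩ :=
      (hPe _ he).exists_eq_append_singleton fun h => hrH u (h ▸ he)
    obtain rfl := hpred w u v hw he
    simp only [hq_eq, lastEdgeCost_append_singleton c hq.2]
  · intro e he e' he' (h : P e.2 = P e'.2)
    have hlast : (P e'.2).getLast? = some e.2 := h ▸ (hPe e he).2
    have h2 : e.2 = e'.2 := Option.some_injective _ (hlast.symm.trans (hPe e' he').2)
    exact Prod.ext (hpred _ _ _ he (h2 ▸ he')) h2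

end Arborescence

theorem arborescence_embeds_in_suffixTree_general
    {V : Type*} [DecidableEq V]
    (E H : Finset (V × V)) (hHE : H ⊆ E) (c : V × V → ℝ)
    (r : V) (hr : ∀ u, (u, r) ∉ E)
    (hindeg : ∀ v, v ≠ r → InVerts H v → inDeg H v = 1)
    (hreach : ∀ v, InVerts H v → ∃ p, IsRPathTo H r v p) :
    ∃ S : Finset (List V),
      (∀ p ∈ S, IsRPath E r p) ∧
      [r] ∈ S ∧
      (∀ (p : List V) (x : V), p ≠ [] → p ++ [x] ∈ S → p ∈ S) ∧
      (∑ p ∈ S, lastEdgeCost c p) = ∑ e ∈ H, c e ∧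
      (∀ v, InVerts H v → ∃ p ∈ S, IsRPathTo H r v p) := by
  have hrH : ∀ u, (u, r) ∉ H := fun u hu => hr u (hHE hu)
  have hpred : ∀ u w v, (u, v) ∈ H → (w, v) ∈ H → u = w := fun u _ v hu hw =>
    eq_of_inDeg_eq_one (hindeg v (by rintro rfl; exact hrH u hu) ⟨_, hu, Or.inr rfl⟩) hu hw
  choose! P hP using hreach
  have hS := fun p => mem_arborescencePaths_iff (p := p) hpred hP
  refine ⟨arborescencePaths H r P, fun p hp => ?_, (hS _).2 ⟨r, isRPathTo_singleton⟩,
    fun p x hp hpx => ?_, sum_lastEdgeCost_arborescencePaths c hpred hrH hP,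
    fun v hv => ⟨P v, (hS _).2 ⟨v, hP v hv⟩, hP v hv⟩⟩
  · obtain ⟨v, hv⟩ := (hS p).1 hp
    exact hv.1.mono hHE
  · obtain ⟨v, hv⟩ := (hS _).1 hpx
    obtain ⟨u, hu, -⟩ := hv.of_append_singleton hp
    exact (hS p).2 ⟨u, hu⟩

/-- For every out-arborescence `H ⊆ G` rooted at `r`, there is a subtree of the
path-suffix tree of `G` (a prefix-closed set `S` of rooted paths containing the
trivial path `[r]`) whose total cost (each non-trivial path contributing the cost of
its last edge) equals the cost of `H`, and which contains, for every vertex `v` of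
`H`, the `r→v` path of `H`. -/
theorem arborescence_embeds_in_suffixTree
    {V : Type*} [Fintype V] [DecidableEq V]
    (E H : Finset (V × V)) (hHE : H ⊆ E) (c : V × V → ℝ) (hc : ∀ e, 0 ≤ c e)
    (r : V) (hr : ∀ u, (u, r) ∉ E)
    (hindeg : ∀ v, v ≠ r → InVerts H v → inDeg H v = 1)
    (hreach : ∀ v, InVerts H v → ∃ p, IsRPathTo H r v p) :
    ∃ S : Finset (List V),
      (∀ p ∈ S, IsRPath E r p) ∧
      [r] ∈ S ∧
      (∀ (p : List V) (x : V), p ≠ [] → p ++ [x] ∈ S → p ∈ S) ∧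
      (∑ p ∈ S, lastEdgeCost c p) = ∑ e ∈ H, c e ∧
      (∀ v, InVerts H v → ∃ p ∈ S, IsRPathTo H r v p) :=
  arborescence_embeds_in_suffixTree_general E H hHE c r hr hindeg hreach
end

section
/- Let (x, f, y) be a feasible solution to LP-k-DST* on a D-shallow instance (D ≥ 2), and define the embedded solution on the path-suffix tree 𝒢 by x̂_{{p, p+e}} = y_{p+e}. Then the total cost satisfies Σ_{e' ∈ E(𝒢)} c_{e'} x̂_{e'} ≤ k^{D−2} · Σ_{e ∈ E(G)} c_e x_e. -/
open scoped Classical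

/-! Charge each tree edge `{p, p+e}` to the graph edge `e`. The tree edges over `e` are indexed
by `Q_D(e)` and all cost `c_e`, so together they cost `c_e · Σ_{p ∈ Q_D(e)} y_p`, which the
Aggregating-`k`-Flow constraint with `ℓ = D` bounds by `k^(D-2) · c_e x_e`. -/

lemma rel_of_mem_pathEdges {V : Type*} {R : V → V → Prop} :
    ∀ {p : List V}, p.IsChain R → ∀ e ∈ pathEdges p, R e.1 e.2
  | [], _, e, he => by simp [pathEdges] at he
  | [_], _, e, he => by simp [pathEdges] at he
  | _ :: _ :: _, h, e, he => by
    rw [List.isChain_cons_cons] at h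
    simp only [pathEdges, List.tail_cons, List.zip_cons_cons, List.mem_cons] at he
    rcases he with rfl | he
    · exact h.1
    · exact rel_of_mem_pathEdges h.2 e he

lemma length_pathEdges {V : Type*} (p : List V) : (pathEdges p).length = p.length - 1 := by
  simp [pathEdges]

lemma pathEdges_ne_nil_iff {V : Type*} {p : List V} : pathEdges p ≠ [] ↔ 2 ≤ p.length := by
  rw [← List.length_pos_iff, length_pathEdges]
  omega

lemma lastEdgeCost_eq_of_getLast? {V : Type*} {c : V × V → ℝ} {p : List V} {e : V × V}
    (h : (pathEdges p).getLast? = some e) : lastEdgeCost c p = c e := by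
  simp [lastEdgeCost, h]

section PathsEndingAt

variable {V : Type*} (E : Finset (V × V)) (r : V) (D : ℕ)

/-- The paper's `Q_D(e)`; paths are vertex lists, so `D` edges means `D + 1` vertices. -/
def pathsEndingAt (e : V × V) : Set (List V) :=
  {p | IsRPath E r p ∧ p.length ≤ D + 1 ∧ (pathEdges p).getLast? = some e}

lemma finite_pathsEndingAt [Finite V] (e : V × V) : (pathsEndingAt E r D e).Finite :=
  (List.finite_length_le V (D + 1)).subset fun _ hp => hp.2.1

lemma pairwiseDisjoint_pathsEndingAt (I : Set (V × V)) :
    I.PairwiseDisjoint (pathsEndingAt E r D) :=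
  fun _ _ _ _ hne => Set.disjoint_left.2 fun _ hp hp' =>
    hne (Option.some_injective _ (hp.2.2.symm.trans hp'.2.2))

lemma setOf_isRPath_eq_biUnion_pathsEndingAt :
    {p : List V | IsRPath E r p ∧ 2 ≤ p.length ∧ p.length ≤ D + 1} =
      ⋃ e ∈ (E : Set (V × V)), pathsEndingAt E r D e := by
  ext p
  simp only [pathsEndingAt, Set.mem_ofPred_eq, Set.mem_iUnion, Finset.mem_coe]
  constructor
  · rintro ⟨hp, h2, hle⟩
    have hne := pathEdges_ne_nil_iff.2 h2
    exact ⟨_, rel_of_mem_pathEdges hp.2.1 _ (List.getLast_mem hne), hp, hle,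
      List.getLast?_eq_some_getLast hne⟩
  · rintro ⟨e, -, hp, hle, hlast⟩
    exact ⟨hp, pathEdges_ne_nil_iff.1 (by simp [← List.getLast?_isSome, hlast]), hle⟩

lemma finsum_mem_pathsEndingAt_lastEdgeCost_mul (c : V × V → ℝ) (y : List V → ℝ) (e : V × V) :
    ∑ᶠ p ∈ pathsEndingAt E r D e, lastEdgeCost c p * y p =
      c e * ∑ᶠ p ∈ pathsEndingAt E r D e, y p := by
  rw [mul_finsum_mem]
  exact finsum_mem_congr rfl fun p hp => by rw [lastEdgeCost_eq_of_getLast? hp.2.2]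

end PathsEndingAt

theorem embedded_tree_cost_le_general
    {V : Type*} [Fintype V]
    (E : Finset (V × V)) (r : V) (c x : V × V → ℝ) (y : List V → ℝ)
    (k D : ℕ) (hk : 1 ≤ k) (hD : 2 ≤ D)
    (hc : ∀ e, 0 ≤ c e)
    (hagg : ∀ e ∈ E, ∀ ℓ : ℕ, 1 ≤ ℓ → ℓ ≤ D →
      ∑ᶠ p ∈ {p : List V |
          IsRPath E r p ∧ p.length ≤ ℓ + 1 ∧ (pathEdges p).getLast? = some e}, y p
        ≤ max 1 ((k : ℝ) ^ (ℓ - 2)) * x e) :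
    ∑ᶠ p ∈ {p : List V | IsRPath E r p ∧ 2 ≤ p.length ∧ p.length ≤ D + 1},
        lastEdgeCost c p * y p
      ≤ (k : ℝ) ^ (D - 2) * ∑ e ∈ E, c e * x e := by
  have hmax : max 1 ((k : ℝ) ^ (D - 2)) = (k : ℝ) ^ (D - 2) :=
    max_eq_right (one_le_pow₀ (by exact_mod_cast hk))
  rw [setOf_isRPath_eq_biUnion_pathsEndingAt,
    finsum_mem_biUnion (pairwiseDisjoint_pathsEndingAt E r D _) E.finite_toSet
      fun e _ => finite_pathsEndingAt E r D e,
    finsum_mem_coe_finset, Finset.mul_sum]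
  refine Finset.sum_le_sum fun e he => ?_
  rw [finsum_mem_pathsEndingAt_lastEdgeCost_mul, mul_left_comm]
  have hQ := hagg e he D (by omega) le_rfl
  rw [hmax] at hQ
  exact mul_le_mul_of_nonneg_left hQ (hc e)

/-- Cost of the tree embedding: if `(x, f, y)` satisfies the Aggregating-`k`-Flow
constraints of LP-k-DST* on a `D`-shallow instance (`D ≥ 2`), then the total cost of
the embedded solution `x̂` on the path-suffix tree (each tree edge `{p, p+e}` has
capacity `y_{p+e}` and cost `c_e`) is at most `k^(D−2)` times the LP cost `Σ c_e x_e`. -/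
theorem embedded_tree_cost_le
    {V : Type*} [Fintype V] [DecidableEq V]
    (E : Finset (V × V)) (r : V) (c x : V × V → ℝ) (y : List V → ℝ)
    (k D : ℕ) (hk : 1 ≤ k) (hD : 2 ≤ D)
    (hc : ∀ e, 0 ≤ c e) (hy : ∀ p, 0 ≤ y p)
    (hagg : ∀ e ∈ E, ∀ ℓ : ℕ, 1 ≤ ℓ → ℓ ≤ D →
      ∑ᶠ p ∈ {p : List V |
          IsRPath E r p ∧ p.length ≤ ℓ + 1 ∧ (pathEdges p).getLast? = some e}, y p
        ≤ max 1 ((k : ℝ) ^ (ℓ - 2)) * x e) :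
    ∑ᶠ p ∈ {p : List V | IsRPath E r p ∧ 2 ≤ p.length ∧ p.length ≤ D + 1},
        lastEdgeCost c p * y p
      ≤ (k : ℝ) ^ (D - 2) * ∑ e ∈ E, c e * x e :=
  embedded_tree_cost_le_general E r c x y k D hk hD hc hagg
end
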